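/- Let n ≥ 4 and let DP_n be the n-element drastic product chain with elements 0 = a_{n−1} < ⋯ < a_1 < 1. Let X_n = {(a_i, a_j) : n−1 ≥ i ≥ j ≥ 2}, ordered coordinate-wise by the chain order, and for each up-set U of X_n let K_n^U = K_n^∅ ∪ {(x,y) : (x,y) ∈ U or (y,x) ∈ U}, where K_n^∅ = {(x,1), (1,x), (x,a_1), (a_1,x) : x ∈ DP_n}. Then a subset S of K(DP_n) is the universe of an admissible subalgebra of the twist-product K(DP_n) if and only if S = K_n^U for some up-set U of X_n; moreover, for up-sets U and W of X_n, K_n^U ⊆ K_n^W if and only if U ⊆ W. -/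

import Mathlib

/-- The top element `1` of the `n`-element drastic product chain
`DP_n = {0 = a_{n-1} < ... < a_1 < 1}`, realized on `Fin n` (the element `a_i`
corresponds to the index `n - 1 - i`). -/
def dpTop (n : ℕ) (hn : 2 ≤ n) : Fin n := ⟨n - 1, by omega⟩

/-- The coatom `a_1` of the drastic product chain `DP_n`. -/
def dpCoatom (n : ℕ) (hn : 2 ≤ n) : Fin n := ⟨n - 2, by omega⟩

/-- The bottom element `0 = a_{n-1}` of the drastic product chain `DP_n`. -/
def dpBot (n : ℕ) (hn : 2 ≤ n) : Fin n := ⟨0, by omega⟩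

/-- The drastic product: `a·b = 0` if `a ≠ 1` and `b ≠ 1`, else `a ∧ b`. -/
def dpMul (n : ℕ) (hn : 2 ≤ n) (a b : Fin n) : Fin n :=
  if a ≠ dpTop n hn ∧ b ≠ dpTop n hn then dpBot n hn else min a b

/-- The residual of the drastic product: `x → y = 1` if `x ≤ y`, `x → y = y`
if `x = 1 > y`, and `x → y = a_1` if `y < x < 1`. -/
def dpImp (n : ℕ) (hn : 2 ≤ n) (a b : Fin n) : Fin n :=
  if a ≤ b then dpTop n hn else if a = dpTop n hn then b else dpCoatom n hn

/-- Join in the twist-product `K(DP_n)`. -/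
def dpKjoin (n : ℕ) (x y : Fin n × Fin n) : Fin n × Fin n :=
  (max x.1 y.1, min x.2 y.2)

/-- Meet in the twist-product `K(DP_n)`. -/
def dpKmeet (n : ℕ) (x y : Fin n × Fin n) : Fin n × Fin n :=
  (min x.1 y.1, max x.2 y.2)

/-- Product in the twist-product `K(DP_n)`. -/
def dpKmul (n : ℕ) (hn : 2 ≤ n) (x y : Fin n × Fin n) : Fin n × Fin n :=
  (dpMul n hn x.1 y.1, min (dpImp n hn x.1 y.2) (dpImp n hn y.1 x.2))

/-- Implication in the twist-product `K(DP_n)`. -/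
def dpKhimp (n : ℕ) (hn : 2 ≤ n) (x y : Fin n × Fin n) : Fin n × Fin n :=
  (min (dpImp n hn x.1 y.1) (dpImp n hn y.2 x.2), dpMul n hn x.1 y.2)

/-- An admissible subalgebra of `K(DP_n)`: contains `(1,1)`, `(0,1)` and
`(a,1)` for all `a`, and is closed under the twist operations. -/
def dpAdmissible (n : ℕ) (hn : 2 ≤ n) (S : Set (Fin n × Fin n)) : Prop :=
  (dpTop n hn, dpTop n hn) ∈ S ∧ (dpBot n hn, dpTop n hn) ∈ S ∧
  (∀ a : Fin n, (a, dpTop n hn) ∈ S) ∧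
  ∀ x ∈ S, ∀ y ∈ S, dpKjoin n x y ∈ S ∧ dpKmeet n x y ∈ S ∧
    dpKmul n hn x y ∈ S ∧ dpKhimp n hn x y ∈ S

/-- The set `K_n^∅ = {(x,1), (1,x), (x,a_1), (a_1,x) : x ∈ DP_n}`. -/
def dpKempty (n : ℕ) (hn : 2 ≤ n) : Set (Fin n × Fin n) :=
  {p | p.2 = dpTop n hn ∨ p.1 = dpTop n hn ∨
       p.2 = dpCoatom n hn ∨ p.1 = dpCoatom n hn}

/-- The indexing poset `X_n = {(a_i, a_j) : n-1 ≥ i ≥ j ≥ 2}`, ordered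
coordinate-wise. In the `Fin n` realization (`a_i ↦ n - 1 - i`) these are
the pairs `(u,v)` with `u ≤ v ≤ n - 3`. -/
def dpX (n : ℕ) : Set (Fin n × Fin n) :=
  {p | p.1 ≤ p.2 ∧ (p.2 : ℕ) ≤ n - 3}

/-- An up-set of the coordinate-wise ordered poset `X_n`. -/
def dpIsUpset (n : ℕ) (U : Set (Fin n × Fin n)) : Prop :=
  U ⊆ dpX n ∧ ∀ p ∈ U, ∀ q ∈ dpX n, p.1 ≤ q.1 → p.2 ≤ q.2 → q ∈ U

/-- `K_n^U = K_n^∅ ∪ {(x,y) : (x,y) ∈ U or (y,x) ∈ U}`. -/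
def dpKU (n : ℕ) (hn : 2 ≤ n) (U : Set (Fin n × Fin n)) : Set (Fin n × Fin n) :=
  dpKempty n hn ∪ {p | p ∈ U ∨ ((p.2, p.1) : Fin n × Fin n) ∈ U}


/-! For `a ≠ 1` the residual `a → b` is `1` or `a₁`, so a product or implication in `K(DP_n)`
either has a coordinate in `{a₁, 1}` (and lies in `K_n^∅`) or reproduces one of its arguments,
possibly swapped; and `K_n^U` is an up-set of `DP_n × DP_n`, which gives closure under `∨`
and `∧`. Conversely, an admissible subalgebra `S` is an up-set (join with `(c, 1)`, then meet
with `(1, d)`), is closed under swapping pairs without coordinate `1` (implication into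
`(0, 1)`), and contains `K_n^∅`; for this one needs `(0, a₁) = (a₁, a_{n-2})²`, which is where
`n ≥ 4` enters. Hence `S = K_n^U` with `U = S ∩ X_n`. -/

section DrasticProduct

variable {n : ℕ} (h : 2 ≤ n)

lemma le_dpTop (a : Fin n) : a ≤ dpTop n h := by
  simp only [Fin.le_def, dpTop]; omega

lemma le_dpBot_iff (a : Fin n) : a ≤ dpBot n h ↔ a = dpBot n h := by
  simp only [Fin.le_def, Fin.ext_iff, dpBot]
  exact Nat.le_zero

lemma val_le_of_lt_dpCoatom {a : Fin n} (ha : a < dpCoatom n h) : (a : ℕ) ≤ n - 3 := by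
  simp only [Fin.lt_def, dpCoatom] at ha; omega

lemma dpCoatom_le_iff (a : Fin n) : dpCoatom n h ≤ a ↔ a = dpCoatom n h ∨ a = dpTop n h := by
  simp only [Fin.le_def, Fin.ext_iff, dpCoatom, dpTop]; omega

lemma dpCoatom_lt_dpTop : dpCoatom n h < dpTop n h := by
  simp only [Fin.lt_def, dpCoatom, dpTop]; omega

lemma le_dpCoatom_of_ne_dpTop {a : Fin n} (ha : a ≠ dpTop n h) : a ≤ dpCoatom n h := by
  simp only [Ne, Fin.ext_iff, dpTop] at ha
  simp only [Fin.le_def, dpCoatom]; omega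

lemma dpImp_of_le {a b : Fin n} (hab : a ≤ b) : dpImp n h a b = dpTop n h := if_pos hab

lemma dpImp_dpTop_left (b : Fin n) : dpImp n h (dpTop n h) b = b := by
  rcases (le_dpTop h b).eq_or_lt with hb | hb
  · rw [dpImp_of_le h hb.ge, hb]
  · rw [dpImp, if_neg (not_le.2 hb), if_pos rfl]

lemma dpImp_of_not_le_of_ne_dpTop {a b : Fin n} (hab : ¬ a ≤ b) (ha : a ≠ dpTop n h) :
    dpImp n h a b = dpCoatom n h := by
  rw [dpImp, if_neg hab, if_neg ha]

lemma dpCoatom_le_dpImp {a : Fin n} (ha : a ≠ dpTop n h) (b : Fin n) :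
    dpCoatom n h ≤ dpImp n h a b := by
  by_cases hab : a ≤ b
  · rw [dpImp_of_le h hab]; exact (dpCoatom_lt_dpTop h).le
  · rw [dpImp_of_not_le_of_ne_dpTop h hab ha]

lemma dpMul_dpTop_left (b : Fin n) : dpMul n h (dpTop n h) b = b := by
  rw [dpMul, if_neg (fun hb => hb.1 rfl), min_eq_right (le_dpTop h b)]

lemma dpMul_dpTop_right (a : Fin n) : dpMul n h a (dpTop n h) = a := by
  rw [dpMul, if_neg (fun ha => ha.2 rfl), min_eq_left (le_dpTop h a)]

lemma dpMul_of_ne_dpTop {a b : Fin n} (ha : a ≠ dpTop n h) (hb : b ≠ dpTop n h) :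
    dpMul n h a b = dpBot n h :=
  if_pos ⟨ha, hb⟩

lemma dpMul_comm (a b : Fin n) : dpMul n h a b = dpMul n h b a := by
  simp only [dpMul, and_comm, min_comm]

lemma dpKmul_comm (x y : Fin n × Fin n) : dpKmul n h x y = dpKmul n h y x := by
  rw [dpKmul, dpKmul, dpMul_comm h, min_comm]

end DrasticProduct

lemma mem_or_swap_mem_iff {α : Type*} [LinearOrder α] {U : Set (α × α)}
    (hU : ∀ p ∈ U, p.1 ≤ p.2) (p : α × α) :
    p ∈ U ∨ (p.2, p.1) ∈ U ↔ (min p.1 p.2, max p.1 p.2) ∈ U := by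
  obtain ⟨a, b⟩ := p
  rcases le_total a b with hab | hba
  · rw [min_eq_left hab, max_eq_right hab]
    refine ⟨fun hp => hp.elim id fun hs => ?_, Or.inl⟩
    obtain rfl := le_antisymm hab (hU _ hs)
    exact hs
  · rw [min_eq_right hba, max_eq_left hba]
    refine ⟨fun hp => hp.elim (fun hs => ?_) id, Or.inr⟩
    obtain rfl := le_antisymm hba (hU _ hs)
    exact hs

lemma dpIsUpset_inter_dpX {n : ℕ} {S : Set (Fin n × Fin n)} (hS : IsUpperSet S) :
    dpIsUpset n (S ∩ dpX n) :=
  ⟨Set.inter_subset_right, fun _ hp _ hq h1 h2 => ⟨hS (Prod.mk_le_mk.2 ⟨h1, h2⟩) hp.1, hq⟩⟩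

section TwistProduct

variable {n : ℕ} (h : 2 ≤ n) {U : Set (Fin n × Fin n)}

lemma sort_mem_dpX {a b : Fin n} (ha : a < dpCoatom n h) (hb : b < dpCoatom n h) :
    (min a b, max a b) ∈ dpX n :=
  ⟨min_le_max, val_le_of_lt_dpCoatom h (max_lt ha hb)⟩

lemma mem_dpKempty_iff (p : Fin n × Fin n) :
    p ∈ dpKempty n h ↔ dpCoatom n h ≤ p.1 ∨ dpCoatom n h ≤ p.2 := by
  rw [dpKempty, Set.mem_ofPred_eq, dpCoatom_le_iff h, dpCoatom_le_iff h]
  tauto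

lemma mem_dpKU_of_dpCoatom_le_fst {p : Fin n × Fin n} (hp : dpCoatom n h ≤ p.1) :
    p ∈ dpKU n h U :=
  Or.inl ((mem_dpKempty_iff h p).2 (Or.inl hp))

lemma mem_dpKU_of_dpCoatom_le_snd {p : Fin n × Fin n} (hp : dpCoatom n h ≤ p.2) :
    p ∈ dpKU n h U :=
  Or.inl ((mem_dpKempty_iff h p).2 (Or.inr hp))

lemma mem_dpKU_iff (hU : U ⊆ dpX n) (p : Fin n × Fin n) :
    p ∈ dpKU n h U ↔
      dpCoatom n h ≤ p.1 ∨ dpCoatom n h ≤ p.2 ∨ (min p.1 p.2, max p.1 p.2) ∈ U := by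
  rw [dpKU, Set.mem_union, mem_dpKempty_iff, Set.mem_ofPred_eq,
    mem_or_swap_mem_iff (fun q hq => (hU hq).1), or_assoc]

lemma swap_mem_dpKU {p : Fin n × Fin n} (hp : p ∈ dpKU n h U) : (p.2, p.1) ∈ dpKU n h U := by
  rcases hp with hp | hp | hp
  · rw [mem_dpKempty_iff] at hp
    exact Or.inl ((mem_dpKempty_iff h _).2 hp.symm)
  · exact Or.inr (Or.inr hp)
  · exact Or.inr (Or.inl hp)

lemma isUpperSet_dpKU (hU : dpIsUpset n U) : IsUpperSet (dpKU n h U) := by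
  intro p q hpq hp
  rw [mem_dpKU_iff h hU.1] at hp ⊢
  rcases hp with hp | hp | hp
  · exact Or.inl (hp.trans hpq.1)
  · exact Or.inr (Or.inl (hp.trans hpq.2))
  by_cases hq : dpCoatom n h ≤ q.1 ∨ dpCoatom n h ≤ q.2
  · exact hq.elim Or.inl (Or.inr ∘ Or.inl)
  rw [not_or, not_le, not_le] at hq
  exact Or.inr (Or.inr (hU.2 _ hp _ (sort_mem_dpX h hq.1 hq.2)
    (min_le_min hpq.1 hpq.2) (max_le_max hpq.1 hpq.2)))

lemma dpKjoin_mem_dpKU (hU : dpIsUpset n U) {x y : Fin n × Fin n}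
    (hx : x ∈ dpKU n h U) (hy : y ∈ dpKU n h U) : dpKjoin n x y ∈ dpKU n h U := by
  rcases min_choice x.2 y.2 with he | he
  · exact isUpperSet_dpKU h hU (Prod.mk_le_mk.2 ⟨le_max_left _ _, he.ge⟩) hx
  · exact isUpperSet_dpKU h hU (Prod.mk_le_mk.2 ⟨le_max_right _ _, he.ge⟩) hy

lemma dpKmeet_mem_dpKU (hU : dpIsUpset n U) {x y : Fin n × Fin n}
    (hx : x ∈ dpKU n h U) (hy : y ∈ dpKU n h U) : dpKmeet n x y ∈ dpKU n h U := by
  rcases min_choice x.1 y.1 with he | he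
  · exact isUpperSet_dpKU h hU (Prod.mk_le_mk.2 ⟨he.ge, le_max_left _ _⟩) hx
  · exact isUpperSet_dpKU h hU (Prod.mk_le_mk.2 ⟨he.ge, le_max_right _ _⟩) hy

lemma min_fst_mem_dpKU {a b t : Fin n} (hab : (a, b) ∈ dpKU n h U) (ht : dpCoatom n h ≤ t) :
    (min a t, b) ∈ dpKU n h U := by
  rcases min_choice a t with he | he <;> rw [he]
  · exact hab
  · exact mem_dpKU_of_dpCoatom_le_fst h ht

lemma min_snd_mem_dpKU {a b t : Fin n} (hab : (a, b) ∈ dpKU n h U) (ht : dpCoatom n h ≤ t) :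
    (a, min b t) ∈ dpKU n h U := by
  rcases min_choice b t with he | he <;> rw [he]
  · exact hab
  · exact mem_dpKU_of_dpCoatom_le_snd h ht

lemma dpKmul_dpTop_left_mem_dpKU (b : Fin n) {y : Fin n × Fin n} (hy : y ∈ dpKU n h U) :
    dpKmul n h (dpTop n h, b) y ∈ dpKU n h U := by
  rw [dpKmul, dpMul_dpTop_left, dpImp_dpTop_left]
  by_cases hy1 : y.1 = dpTop n h
  · exact mem_dpKU_of_dpCoatom_le_fst h (hy1 ▸ (dpCoatom_lt_dpTop h).le)
  · exact min_snd_mem_dpKU h hy (dpCoatom_le_dpImp h hy1 b)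

lemma dpKmul_mem_dpKU {x y : Fin n × Fin n} (hx : x ∈ dpKU n h U) (hy : y ∈ dpKU n h U) :
    dpKmul n h x y ∈ dpKU n h U := by
  obtain ⟨x1, x2⟩ := x
  obtain ⟨y1, y2⟩ := y
  by_cases hx1 : x1 = dpTop n h
  · subst hx1
    exact dpKmul_dpTop_left_mem_dpKU h x2 hy
  by_cases hy1 : y1 = dpTop n h
  · subst hy1
    rw [dpKmul_comm]
    exact dpKmul_dpTop_left_mem_dpKU h y2 hx
  exact mem_dpKU_of_dpCoatom_le_snd h
    (le_min (dpCoatom_le_dpImp h hx1 y2) (dpCoatom_le_dpImp h hy1 x2))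

lemma dpKhimp_mem_dpKU {x y : Fin n × Fin n} (hx : x ∈ dpKU n h U) (hy : y ∈ dpKU n h U) :
    dpKhimp n h x y ∈ dpKU n h U := by
  obtain ⟨x1, x2⟩ := x
  obtain ⟨y1, y2⟩ := y
  rw [dpKhimp]
  by_cases hx1 : x1 = dpTop n h
  · subst hx1
    rw [dpImp_dpTop_left, dpMul_dpTop_left]
    by_cases hy2 : y2 = dpTop n h
    · exact mem_dpKU_of_dpCoatom_le_snd h (hy2 ▸ (dpCoatom_lt_dpTop h).le)
    · exact min_fst_mem_dpKU h hy (dpCoatom_le_dpImp h hy2 x2)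
  by_cases hy2 : y2 = dpTop n h
  · subst hy2
    rw [dpImp_dpTop_left, dpMul_dpTop_right, min_comm]
    exact min_fst_mem_dpKU h (swap_mem_dpKU h hx) (dpCoatom_le_dpImp h hx1 y1)
  exact mem_dpKU_of_dpCoatom_le_fst h
    (le_min (dpCoatom_le_dpImp h hx1 y1) (dpCoatom_le_dpImp h hy2 x2))

lemma dpAdmissible_dpKU (hU : dpIsUpset n U) : dpAdmissible n h (dpKU n h U) :=
  have htop : ∀ a : Fin n, (a, dpTop n h) ∈ dpKU n h U := fun _ =>
    mem_dpKU_of_dpCoatom_le_snd h (dpCoatom_lt_dpTop h).le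
  ⟨htop _, htop _, htop, fun _ hx _ hy => ⟨dpKjoin_mem_dpKU h hU hx hy,
    dpKmeet_mem_dpKU h hU hx hy, dpKmul_mem_dpKU h hx hy, dpKhimp_mem_dpKU h hx hy⟩⟩

end TwistProduct

lemma dpKU_subset_dpKU_iff {n : ℕ} (hn : 3 ≤ n) {U W : Set (Fin n × Fin n)}
    (hU : dpIsUpset n U) (hW : dpIsUpset n W) :
    dpKU n (by omega) U ⊆ dpKU n (by omega) W ↔ U ⊆ W := by
  have h : 2 ≤ n := by omega
  refine ⟨fun hUW u hu => ?_, fun hUW => Set.union_subset_union_right _ fun _ => Or.imp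
    (@hUW _) (@hUW _)⟩
  obtain ⟨hle, hu2⟩ := hU.1 hu
  -- for `n = 2` the truncated `n - 3 = 0` would put `(a₁, a₁)` into `dpX n`
  have hu2 : u.2 < dpCoatom n h := by simp only [Fin.lt_def, dpCoatom]; omega
  have hmem := (mem_dpKU_iff h hW.1 u).1 (hUW (Or.inr (Or.inl hu)))
  rw [min_eq_left hle, max_eq_right hle] at hmem
  exact (hmem.resolve_left (not_le.2 (hle.trans_lt hu2))).resolve_left (not_le.2 hu2)

section AdmissibleSubalgebra

variable {n : ℕ} (h : 2 ≤ n) {S : Set (Fin n × Fin n)}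

lemma dpKhimp_dpBot_dpTop (p : Fin n × Fin n) :
    dpKhimp n h p (dpBot n h, dpTop n h) = (min (dpImp n h p.1 (dpBot n h)) p.2, p.1) := by
  rw [dpKhimp, dpImp_dpTop_left, dpMul_dpTop_right]

lemma dpTop_fst_mem (hS : dpAdmissible n h S) (a : Fin n) : (dpTop n h, a) ∈ S := by
  have hmem := (hS.2.2.2 _ (hS.2.2.1 a) _ hS.1).2.2.2
  rwa [dpKhimp, dpImp_of_le h (le_dpTop h _), dpImp_of_le h le_rfl, min_self,
    dpMul_dpTop_right] at hmem

lemma swap_mem_of_dpAdmissible (hS : dpAdmissible n h S) {p : Fin n × Fin n} (hp : p ∈ S)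
    (h1 : p.1 ≠ dpTop n h) (h2 : p.2 ≠ dpTop n h) : (p.2, p.1) ∈ S := by
  have hmem := (hS.2.2.2 _ hp _ hS.2.1).2.2.2
  rwa [dpKhimp_dpBot_dpTop, min_eq_right
    ((le_dpCoatom_of_ne_dpTop h h2).trans (dpCoatom_le_dpImp h h1 _))] at hmem

lemma sort_mem_iff_of_dpAdmissible (hS : dpAdmissible n h S) {p : Fin n × Fin n}
    (h1 : p.1 ≠ dpTop n h) (h2 : p.2 ≠ dpTop n h) : (min p.1 p.2, max p.1 p.2) ∈ S ↔ p ∈ S := by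
  rcases le_total p.1 p.2 with hle | hle
  · rw [min_eq_left hle, max_eq_right hle]
  · rw [min_eq_right hle, max_eq_left hle]
    exact ⟨fun hp => swap_mem_of_dpAdmissible h hS hp h2 h1,
      fun hp => swap_mem_of_dpAdmissible h hS hp h1 h2⟩

lemma dpCoatom_fst_mem (hS : dpAdmissible n h S) {a : Fin n} (ha0 : a ≠ dpBot n h)
    (haT : a ≠ dpTop n h) : (dpCoatom n h, a) ∈ S := by
  have hmem := (hS.2.2.2 _ (hS.2.2.1 a) _ hS.2.1).2.2.2
  rwa [dpKhimp_dpBot_dpTop, min_eq_left (le_dpTop h _),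
    dpImp_of_not_le_of_ne_dpTop h (mt (le_dpBot_iff h a).1 ha0) haT] at hmem

lemma dpBot_dpCoatom_mem (hS : dpAdmissible n h S) {e : Fin n} (he0 : e ≠ dpBot n h)
    (heC : e < dpCoatom n h) : (dpBot n h, dpCoatom n h) ∈ S := by
  have hC := dpCoatom_lt_dpTop h
  have hmem := (hS.2.2.2 _ (dpCoatom_fst_mem h hS he0 (heC.trans hC).ne) _
    (dpCoatom_fst_mem h hS he0 (heC.trans hC).ne)).2.2.1
  rwa [dpKmul, dpMul_of_ne_dpTop h hC.ne hC.ne, min_self,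
    dpImp_of_not_le_of_ne_dpTop h (not_le.2 heC) hC.ne] at hmem

lemma dpKempty_subset_of_dpAdmissible (hS : dpAdmissible n h S) {e : Fin n}
    (he0 : e ≠ dpBot n h) (heC : e < dpCoatom n h) : dpKempty n h ⊆ S := by
  have hCT := (dpCoatom_lt_dpTop h).ne
  have hC : ∀ a, (dpCoatom n h, a) ∈ S := by
    intro a
    by_cases haT : a = dpTop n h
    · exact haT ▸ hS.2.2.1 _
    by_cases ha0 : a = dpBot n h
    · subst ha0
      exact swap_mem_of_dpAdmissible h hS (dpBot_dpCoatom_mem h hS he0 heC)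
        (by simp only [Ne, Fin.ext_iff, dpBot, dpTop]; omega) hCT
    · exact dpCoatom_fst_mem h hS ha0 haT
  rintro ⟨a, b⟩ hp
  simp only [dpKempty, Set.mem_ofPred_eq] at hp
  rcases hp with rfl | rfl | rfl | rfl
  · exact hS.2.2.1 a
  · exact dpTop_fst_mem h hS b
  · by_cases haT : a = dpTop n h
    · exact haT ▸ dpTop_fst_mem h hS _
    · exact swap_mem_of_dpAdmissible h hS (hC a) hCT haT
  · exact hC b

lemma isUpperSet_of_dpAdmissible (hS : dpAdmissible n h S) : IsUpperSet S := by
  intro p q hpq hp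
  have hjoin := (hS.2.2.2 _ hp _ (hS.2.2.1 q.1)).1
  rw [dpKjoin, max_eq_right hpq.1, min_eq_left (le_dpTop h _)] at hjoin
  have hmeet := (hS.2.2.2 _ hjoin _ (dpTop_fst_mem h hS q.2)).2.1
  rwa [dpKmeet, min_eq_left (le_dpTop h _), max_eq_right hpq.2] at hmeet

lemma eq_dpKU_of_dpAdmissible (hS : dpAdmissible n h S) {e : Fin n} (he0 : e ≠ dpBot n h)
    (heC : e < dpCoatom n h) : S = dpKU n h (S ∩ dpX n) := by
  ext p
  rw [mem_dpKU_iff h Set.inter_subset_right]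
  by_cases hp : dpCoatom n h ≤ p.1 ∨ dpCoatom n h ≤ p.2
  · refine iff_of_true ?_ (hp.elim Or.inl (Or.inr ∘ Or.inl))
    exact dpKempty_subset_of_dpAdmissible h hS he0 heC ((mem_dpKempty_iff h p).2 hp)
  rw [not_or, not_le, not_le] at hp
  have hne1 := (hp.1.trans (dpCoatom_lt_dpTop h)).ne
  have hne2 := (hp.2.trans (dpCoatom_lt_dpTop h)).ne
  simp only [not_le.2 hp.1, not_le.2 hp.2, false_or, Set.mem_inter_iff,
    sort_mem_dpX h hp.1 hp.2, and_true, sort_mem_iff_of_dpAdmissible h hS hne1 hne2]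

end AdmissibleSubalgebra

/-- for `n ≥ 4`, a subset of `K(DP_n)` is the universe of an
admissible subalgebra if and only if it equals `K_n^U` for some up-set `U` of
`X_n`; moreover `K_n^U ⊆ K_n^W` iff `U ⊆ W`. -/
theorem dp_admissible_classification (n : ℕ) (hn : 4 ≤ n) :
    (∀ S : Set (Fin n × Fin n),
      dpAdmissible n (by omega) S ↔
        ∃ U : Set (Fin n × Fin n), dpIsUpset n U ∧ S = dpKU n (by omega) U) ∧
    (∀ U W : Set (Fin n × Fin n), dpIsUpset n U → dpIsUpset n W →
      (dpKU n (by omega) U ⊆ dpKU n (by omega) W ↔ U ⊆ W)) := by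
  have h : 2 ≤ n := by omega
  refine ⟨fun S => ⟨fun hS => ?_, ?_⟩, fun U W hU hW => dpKU_subset_dpKU_iff (by omega) hU hW⟩
  · exact ⟨S ∩ dpX n, dpIsUpset_inter_dpX (isUpperSet_of_dpAdmissible h hS),
      eq_dpKU_of_dpAdmissible h hS (e := ⟨1, by omega⟩)
        (by simp only [Ne, Fin.ext_iff, dpBot]; omega)
        (by simp only [Fin.lt_def, dpCoatom]; omega)⟩
  · rintro ⟨U, hU, rfl⟩
    exact dpAdmissible_dpKU h hU
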